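/- Let (X,d) be a compact metric space with a fixed reference probability measure m, and assume (X,d,m) is regular: every coupling γ between m and any ν ∈ P(X) achieving the infimum defining W₂(m,ν) is of the form γ = (Id,T)_# m for some measurable map T : X → X. For μ ∈ P(X), let B(μ) be the unique minimizer of ν ↦ W₂(ν,m) among all ν ∈ P(X) with supp ν ⊆ b(μ). If μ, ν ∈ P(X) satisfy supp B(μ) = supp B(ν), then B(μ) = B(ν). -/

import Mathlib

open MeasureTheory Filter

section Defs

variable {X : Type*} [MetricSpace X] [MeasurableSpace X]

/-- The set of metric barycenters of `μ`: the minimizers over `y ∈ X` of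
`y ↦ ∫ d(x,y)² dμ(x)`. -/
def bary (μ : ProbabilityMeasure X) : Set X :=
  {y : X | ∀ z : X,
    ∫ x, dist x y ^ 2 ∂(μ : Measure X) ≤ ∫ x, dist x z ^ 2 ∂(μ : Measure X)}

/-- `γ` is a coupling of `μ` and `ν`: a measure on `X × X` with marginals `μ` and `ν`. -/
def IsCoupling (γ : Measure (X × X)) (μ ν : ProbabilityMeasure X) : Prop :=
  γ.map Prod.fst = (μ : Measure X) ∧ γ.map Prod.snd = (ν : Measure X)

/-- The squared 2-Wasserstein distance `W₂(μ,ν)²`. -/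
noncomputable def W2sq (μ ν : ProbabilityMeasure X) : ℝ :=
  sInf {c : ℝ | ∃ γ : Measure (X × X), IsCoupling γ μ ν ∧
    c = ∫ p, dist p.1 p.2 ^ 2 ∂γ}

/-- The 2-Wasserstein distance `W₂(μ,ν)`. -/
noncomputable def W2 (μ ν : ProbabilityMeasure X) : ℝ := Real.sqrt (W2sq μ ν)

/-- The support of a probability measure: the set of points all of whose open
neighbourhoods have positive measure. -/
def mSupport (μ : ProbabilityMeasure X) : Set X :=
  {x : X | ∀ U : Set X, IsOpen U → x ∈ U → (μ : Measure X) U ≠ 0}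

/-- `(X,d,m)` is regular: every coupling between `m` and any `ν ∈ P(X)` achieving the
infimum defining `W₂(m,ν)` is of the form `(Id,T)_# m` for some measurable map `T`. -/
def Regular (m : ProbabilityMeasure X) : Prop :=
  ∀ ν : ProbabilityMeasure X, ∀ γ : Measure (X × X), IsCoupling γ m ν →
    (∫ p, dist p.1 p.2 ^ 2 ∂γ) = W2sq m ν →
    ∃ T : X → X, Measurable T ∧ γ = (m : Measure X).map (fun x => (x, T x))

/-- The variance of `μ`: the minimal value of `y ↦ ∫ d(x,y)² dμ(x)`. -/
noncomputable def mvar (μ : ProbabilityMeasure X) : ℝ :=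
  ⨅ y : X, ∫ x, dist x y ^ 2 ∂(μ : Measure X)

end Defs

/-!
Regularity makes `ν ↦ W₂(m,ν)²` strictly convex along mixtures: if the average `½γ₁ + ½γ₂` of
optimal plans from `m` to `ν₁` and `ν₂` were optimal from `m` to `½ν₁ + ½ν₂`, it would be
induced by a map `T`; then so would be `γ₁` and `γ₂`, which it dominates, and `ν₁ = T#m = ν₂`.
If `B(μ)` and `B(ν)` have the same support, both minimize `W₂(·,m)` among measures supported in
`b(μ)`, and so does their mixture, whose support lies in the same set; strict convexity
then forces `B(μ) = B(ν)`.
-/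

open scoped ENNReal

section Coupling

variable {X : Type*} [MeasurableSpace X]

lemma IsCoupling.isProbabilityMeasure {γ : Measure (X × X)} {μ ν : ProbabilityMeasure X}
    (h : IsCoupling γ μ ν) : IsProbabilityMeasure γ := by
  constructor
  simpa [Measure.map_apply measurable_fst MeasurableSet.univ] using congrArg (· Set.univ) h.1

lemma isCoupling_prod (μ ν : ProbabilityMeasure X) :
    IsCoupling ((μ : Measure X).prod ν) μ ν :=
  ⟨by simp, by simp⟩

lemma IsCoupling.map_swap {γ : Measure (X × X)} {μ ν : ProbabilityMeasure X}
    (h : IsCoupling γ μ ν) : IsCoupling (γ.map Prod.swap) ν μ := by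
  refine ⟨?_, ?_⟩
  · rw [Measure.map_map measurable_fst measurable_swap]; exact h.2
  · rw [Measure.map_map measurable_snd measurable_swap]; exact h.1

noncomputable def MeasureTheory.ProbabilityMeasure.halfMix (μ ν : ProbabilityMeasure X) :
    ProbabilityMeasure X :=
  ⟨(2⁻¹ : ℝ≥0∞) • (μ : Measure X) + (2⁻¹ : ℝ≥0∞) • (ν : Measure X),
    ⟨by simp [ENNReal.inv_two_add_inv_two]⟩⟩

lemma MeasureTheory.ProbabilityMeasure.toMeasure_halfMix (μ ν : ProbabilityMeasure X) :
    (μ.halfMix ν : Measure X) = (2⁻¹ : ℝ≥0∞) • (μ : Measure X) + (2⁻¹ : ℝ≥0∞) • (ν : Measure X) :=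
  rfl

lemma IsCoupling.halfMix {γ₁ γ₂ : Measure (X × X)} {μ ν₁ ν₂ : ProbabilityMeasure X}
    (h₁ : IsCoupling γ₁ μ ν₁) (h₂ : IsCoupling γ₂ μ ν₂) :
    IsCoupling ((2⁻¹ : ℝ≥0∞) • γ₁ + (2⁻¹ : ℝ≥0∞) • γ₂) μ (ν₁.halfMix ν₂) := by
  refine ⟨?_, ?_⟩
  · rw [Measure.map_add _ _ measurable_fst, Measure.map_smul, Measure.map_smul, h₁.1, h₂.1,
      ← add_smul, ENNReal.inv_two_add_inv_two, one_smul]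
  · rw [Measure.map_add _ _ measurable_snd, Measure.map_smul, Measure.map_smul, h₁.2, h₂.2,
      ProbabilityMeasure.toMeasure_halfMix]

end Coupling

lemma ae_eq_of_map_graph_absolutelyContinuous {α β : Type*} [MeasurableSpace α]
    [MeasurableSpace β] [MeasurableEq β] {m : Measure α} {T T' : α → β}
    (hT : Measurable T) (hT' : Measurable T')
    (h : m.map (fun x => (x, T' x)) ≪ m.map (fun x => (x, T x))) : T' =ᵐ[m] T := by
  have hE : MeasurableSet {p : α × β | p.2 = T p.1} :=
    measurableSet_eq_fun measurable_snd (hT.comp measurable_fst)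
  have hgraph : m.map (fun x => (x, T x)) {p | p.2 = T p.1}ᶜ = 0 := by
    rw [Measure.map_apply (by fun_prop) hE.compl]
    simp
  have := h hgraph
  rw [Measure.map_apply (by fun_prop) hE.compl] at this
  exact ae_iff.2 this

section Wasserstein

variable {X : Type*} [MetricSpace X] [MeasurableSpace X]

lemma mSupport_halfMix_subset (μ ν : ProbabilityMeasure X) :
    mSupport (μ.halfMix ν) ⊆ mSupport μ ∪ mSupport ν := by
  intro x hx
  by_contra hx'
  simp only [mSupport, Set.mem_union, Set.mem_ofPred, not_or, not_forall, not_not] at hx'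
  obtain ⟨⟨U, hU, hxU, hμU⟩, V, hV, hxV, hνV⟩ := hx'
  refine hx (U ∩ V) (hU.inter hV) ⟨hxU, hxV⟩ ?_
  simp [ProbabilityMeasure.toMeasure_halfMix, measure_mono_null Set.inter_subset_left hμU,
    measure_mono_null Set.inter_subset_right hνV]

lemma integral_dist_sq_map_swap (γ : Measure (X × X)) :
    ∫ p, dist p.1 p.2 ^ 2 ∂(γ.map Prod.swap) = ∫ p, dist p.1 p.2 ^ 2 ∂γ := by
  refine (integral_map_equiv MeasurableEquiv.prodComm
    (fun p : X × X => dist p.1 p.2 ^ 2)).trans ?_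
  simp [MeasurableEquiv.prodComm, dist_comm]

lemma bddBelow_transportCosts (μ ν : ProbabilityMeasure X) :
    BddBelow {c : ℝ | ∃ γ : Measure (X × X), IsCoupling γ μ ν ∧
      c = ∫ p, dist p.1 p.2 ^ 2 ∂γ} := by
  refine ⟨0, ?_⟩
  rintro _ ⟨γ, -, rfl⟩
  exact integral_nonneg fun _ => sq_nonneg _

lemma W2sq_le_integral {γ : Measure (X × X)} {μ ν : ProbabilityMeasure X}
    (h : IsCoupling γ μ ν) : W2sq μ ν ≤ ∫ p, dist p.1 p.2 ^ 2 ∂γ :=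
  csInf_le (bddBelow_transportCosts μ ν) ⟨γ, h, rfl⟩

lemma le_W2sq {μ ν : ProbabilityMeasure X} {c : ℝ}
    (h : ∀ γ : Measure (X × X), IsCoupling γ μ ν → c ≤ ∫ p, dist p.1 p.2 ^ 2 ∂γ) :
    c ≤ W2sq μ ν :=
  le_csInf ⟨_, _, isCoupling_prod μ ν, rfl⟩ (by rintro _ ⟨γ, hγ, rfl⟩; exact h γ hγ)

lemma W2sq_nonneg (μ ν : ProbabilityMeasure X) : 0 ≤ W2sq μ ν :=
  le_W2sq fun _ _ => integral_nonneg fun _ => sq_nonneg _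

lemma W2sq_comm (μ ν : ProbabilityMeasure X) : W2sq μ ν = W2sq ν μ := by
  have key (α β : ProbabilityMeasure X) : W2sq α β ≤ W2sq β α :=
    le_W2sq fun γ hγ => integral_dist_sq_map_swap γ ▸ W2sq_le_integral hγ.map_swap
  exact (key μ ν).antisymm (key ν μ)

lemma sq_W2 (μ ν : ProbabilityMeasure X) : W2 μ ν ^ 2 = W2sq μ ν :=
  Real.sq_sqrt (W2sq_nonneg μ ν)

variable [CompactSpace X] [BorelSpace X]

lemma exists_isCoupling_integral_eq_W2sq (μ ν : ProbabilityMeasure X) :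
    ∃ γ : Measure (X × X), IsCoupling γ μ ν ∧ ∫ p, dist p.1 p.2 ^ 2 ∂γ = W2sq μ ν := by
  set S : Set (ProbabilityMeasure (X × X)) :=
    {γ | γ.map measurable_fst.aemeasurable = μ ∧ γ.map measurable_snd.aemeasurable = ν}
  have hS (γ : ProbabilityMeasure (X × X)) : γ ∈ S ↔ IsCoupling γ μ ν := by
    simp only [S, IsCoupling, ← ProbabilityMeasure.toMeasure_injective.eq_iff,
      ProbabilityMeasure.toMeasure_map, Set.mem_ofPred]
  have hS_compact : IsCompact S :=
    ((isClosed_eq (ProbabilityMeasure.continuous_map continuous_fst) continuous_const).inter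
      (isClosed_eq (ProbabilityMeasure.continuous_map continuous_snd) continuous_const)).isCompact
  have hS_nonempty : S.Nonempty := ⟨⟨_, inferInstance⟩, (hS _).2 (isCoupling_prod μ ν)⟩
  let cost : C(X × X, ℝ) := ⟨fun p => dist p.1 p.2 ^ 2, by fun_prop⟩
  obtain ⟨γ₀, hγ₀S, hγ₀min⟩ := hS_compact.exists_isMinOn hS_nonempty
    (ProbabilityMeasure.continuous_integral_continuousMap cost).continuousOn
  have hγ₀ := (hS γ₀).1 hγ₀S
  refine ⟨γ₀, hγ₀, le_antisymm (le_W2sq fun γ hγ => ?_) (W2sq_le_integral hγ₀)⟩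
  have := hγ.isProbabilityMeasure
  exact hγ₀min ((hS ⟨γ, this⟩).2 hγ)

lemma integral_dist_sq_half_add_half (γ₁ γ₂ : Measure (X × X)) [IsFiniteMeasure γ₁]
    [IsFiniteMeasure γ₂] :
    ∫ p, dist p.1 p.2 ^ 2 ∂((2⁻¹ : ℝ≥0∞) • γ₁ + (2⁻¹ : ℝ≥0∞) • γ₂) =
      (∫ p, dist p.1 p.2 ^ 2 ∂γ₁ + ∫ p, dist p.1 p.2 ^ 2 ∂γ₂) / 2 := by
  have hint (γ : Measure (X × X)) [IsFiniteMeasure γ] :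
      Integrable (fun p : X × X => dist p.1 p.2 ^ 2) ((2⁻¹ : ℝ≥0∞) • γ) :=
    ((by fun_prop : Continuous fun p : X × X => dist p.1 p.2 ^ 2).integrable_of_hasCompactSupport
      (HasCompactSupport.of_compactSpace _)).smul_measure (by simp)
  rw [integral_add_measure (hint γ₁) (hint γ₂), integral_smul_measure, integral_smul_measure]
  norm_num
  ring

theorem Regular.W2sq_halfMix_lt {m : ProbabilityMeasure X} (hm : Regular m)
    {ν₁ ν₂ : ProbabilityMeasure X} (hne : ν₁ ≠ ν₂) :
    W2sq m (ν₁.halfMix ν₂) < (W2sq m ν₁ + W2sq m ν₂) / 2 := by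
  obtain ⟨γ₁, hγ₁, hc₁⟩ := exists_isCoupling_integral_eq_W2sq m ν₁
  obtain ⟨γ₂, hγ₂, hc₂⟩ := exists_isCoupling_integral_eq_W2sq m ν₂
  have := hγ₁.isProbabilityMeasure
  have := hγ₂.isProbabilityMeasure
  have hγ := hγ₁.halfMix hγ₂
  have hc : ∫ p, dist p.1 p.2 ^ 2 ∂((2⁻¹ : ℝ≥0∞) • γ₁ + (2⁻¹ : ℝ≥0∞) • γ₂) =
      (W2sq m ν₁ + W2sq m ν₂) / 2 := by
    rw [integral_dist_sq_half_add_half, hc₁, hc₂]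
  by_contra! hle
  obtain ⟨T, hT, hγT⟩ := hm _ _ hγ (le_antisymm (hc ▸ hle) (W2sq_le_integral hγ))
  have hmap {ν : ProbabilityMeasure X} {γ : Measure (X × X)} (hγ : IsCoupling γ m ν)
      (hc : ∫ p, dist p.1 p.2 ^ 2 ∂γ = W2sq m ν)
      (hac : γ ≪ (m : Measure X).map (fun x => (x, T x))) :
      (ν : Measure X) = (m : Measure X).map T := by
    obtain ⟨T', hT', rfl⟩ := hm ν γ hγ hc
    rw [← hγ.2, Measure.map_map measurable_snd (by fun_prop)]
    exact Measure.map_congr (ae_eq_of_map_graph_absolutelyContinuous hT hT' hac)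
  have h₁ := hmap hγ₁ hc₁ (hγT ▸ (Measure.absolutelyContinuous_smul (by simp)).add_right _)
  have h₂ := hmap hγ₂ hc₂ (hγT ▸ (Measure.absolutelyContinuous_smul (by simp)).add_right' _)
  exact hne (ProbabilityMeasure.toMeasure_injective (h₁.trans h₂.symm))

end Wasserstein

/-- If `(X,d,m)` is regular and `B` assigns to each `ρ ∈ P(X)` the unique minimizer of
`ν ↦ W₂(ν,m)` among all `ν` with `supp ν ⊆ b(ρ)`, then measures whose regularized
barycenters have equal supports have equal regularized barycenters. -/
theorem support_determines_barycenter
    {X : Type*} [MetricSpace X] [CompactSpace X]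
    [MeasurableSpace X] [BorelSpace X]
    (m : ProbabilityMeasure X) (hreg : Regular m)
    (B : ProbabilityMeasure X → ProbabilityMeasure X)
    (hB : ∀ ρ : ProbabilityMeasure X, mSupport (B ρ) ⊆ bary ρ ∧
      ∀ ν : ProbabilityMeasure X, mSupport ν ⊆ bary ρ → W2 (B ρ) m ≤ W2 ν m)
    (μ ν : ProbabilityMeasure X)
    (h : mSupport (B μ) = mSupport (B ν)) :
    B μ = B ν := by
  obtain ⟨hμsub, hμmin⟩ := hB μ
  obtain ⟨hνsub, hνmin⟩ := hB ν
  have hW : W2 (B μ) m = W2 (B ν) m :=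
    le_antisymm (hμmin _ (by rwa [← h])) (hνmin _ (by rwa [h]))
  have hmid : W2 (B μ) m ≤ W2 ((B μ).halfMix (B ν)) m := by
    refine hμmin _ ((mSupport_halfMix_subset _ _).trans ?_)
    rwa [← h, Set.union_self]
  by_contra hne
  have hlt := hreg.W2sq_halfMix_lt hne
  rw [W2sq_comm m, W2sq_comm m, W2sq_comm m, ← sq_W2, ← sq_W2, ← sq_W2, ← hW] at hlt
  have : W2 (B μ) m ^ 2 ≤ W2 ((B μ).halfMix (B ν)) m ^ 2 :=
    pow_le_pow_left₀ (Real.sqrt_nonneg _) hmid 2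
  linarith
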